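/- For any abstract probabilistic event-clock automata E1 and E2 (action-deterministic, over the same actions and atomic propositions), the region construction commutes with conjunction up to mutual weak refinement: R(E1 ∧ E2) ≡ R(E1) ∧ R(E2), where ≡ denotes weak refinement in both directions. -/
import Mathlib


/- ----------------------------------------------------------------------
   Common definitions: (abstract) probabilistic timed automata, region
   automata, satisfaction, refinement, divergence, pruning, abstraction,
   event-clock automata, conjunction and parallel composition.

   Guards (clock constraints) are represented semantically, as sets of
   clock valuations; probability constraints are represented by their
   satisfaction sets (the paper does not fix a constraint language).
   Regions are taken at the finest granularity (one valuation per
   region), so the region construction yields the (time-abstract)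
   semantics of the automaton; the reset function ζ of a region label
   is merged into the target distribution (a PA over the alphabet
   Θ(X) × A × (2^X)^S is represented by the structure `RPA` below,
   whose transitions carry a region label and a distribution over
   reset-set/state pairs).
   ---------------------------------------------------------------------- -/

open scoped Classical
open scoped NNReal ENNReal

noncomputable section

/-- Clock valuations over the clock set `X`. -/
abbrev Val (X : Type) := X → ℝ≥0

def valZero (X : Type) : Val X := fun _ => 0

/-- Letting time `t` elapse. -/
def valShift {X : Type} (v : Val X) (t : ℝ≥0) : Val X := fun x => v x + t

/-- Resetting the clocks in `Y` to zero. -/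
def valReset {X : Type} (v : Val X) (Y : Set X) : Val X :=
  fun x => if x ∈ Y then 0 else v x

/-- Clock constraints (guards) over `X`, represented semantically. -/
abbrev Guard (X : Type) := Set (Val X)

/-- The computed negation of a guard: a set of guards whose joint
complement is the guard. -/
def Guard.negSet {X : Type} (g : Guard X) : Set (Guard X) := {gᶜ}

/-- The three-valued complete lattice `⊥ < ? < ⊤` of modalities. -/
inductive B3 : Type
  | bot
  | may
  | must
deriving DecidableEq

/-- Probabilistic timed automata. -/
structure PTA (L A X AP : Type) where
  V : L → Set AP
  T : L → Guard X → A → PMF (Set X × L) → Prop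
  init : L

/-- Abstract probabilistic timed automata: sets of admissible atomic
propositions, three-valued edges, probability constraints (represented
by their sets of satisfying distributions). -/
structure APTA (L A X AP : Type) where
  V : L → Set (Set AP)
  T : L → Guard X → A → Set (PMF (Set X × L)) → B3
  init : L

/-- Probabilistic automata over the alphabet `Θ(X) × A × (2^X)^S`,
with the reset function of each label merged into the transition's
distribution (which therefore ranges over reset-set/state pairs). -/
structure RPA (S A X AP : Type) where
  V : S → Set AP
  T : S → Val X → A → PMF (Set X × S) → Prop
  init : S

/-- Abstract probabilistic automata over the alphabet
`Θ(X) × A × (2^X)^S` (see `RPA`). -/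
structure RAPA (S A X AP : Type) where
  V : S → Set (Set AP)
  T : S → Val X → A → Set (PMF (Set X × S)) → B3
  init : S

/-! ### Region construction -/

/-- Region automaton of a PTA, before restricting to reachable states. -/
def PTA.regionPre {L A X AP : Type} (M : PTA L A X AP) : RPA (L × Val X) A X AP where
  init := (M.init, valZero X)
  V := fun s => M.V s.1
  T := fun s v a μ' => ∃ g μ t, M.T s.1 g a μ ∧ v = valShift s.2 t ∧ v ∈ g ∧
        μ' = μ.map (fun p => (p.1, (p.2, valReset v p.1)))

/-- Reachability in an `RPA`. -/
inductive RPA.Reach {S A X AP : Type} (P : RPA S A X AP) : S → Prop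
  | init : RPA.Reach P P.init
  | step {s : S} {v : Val X} {a : A} {μ : PMF (Set X × S)} {Y : Set X} {s' : S} :
      RPA.Reach P s → P.T s v a μ → μ (Y, s') ≠ 0 → RPA.Reach P s'

/-- The region PA `R(M)` of a PTA `M` (transitions restricted to
reachable sources). -/
def PTA.region {L A X AP : Type} (M : PTA L A X AP) : RPA (L × Val X) A X AP where
  init := M.regionPre.init
  V := M.regionPre.V
  T := fun s v a μ => M.regionPre.Reach s ∧ M.regionPre.T s v a μ

/-- Lifting a probability constraint over `2^X × L` to region states. -/
def liftConstraint {X L : Type} (v : Val X) (φ : Set (PMF (Set X × L))) :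
    Set (PMF (Set X × (L × Val X))) :=
  (fun μ => μ.map (fun p => (p.1, (p.2, valReset v p.1)))) '' φ

/-- Region APA of an APTA, before restricting to reachable states. -/
def APTA.regionPre {L A X AP : Type} (𝒜 : APTA L A X AP) : RAPA (L × Val X) A X AP where
  init := (𝒜.init, valZero X)
  V := fun s => 𝒜.V s.1
  T := fun s v a φ' =>
    if ∃ g φ t, 𝒜.T s.1 g a φ = B3.must ∧ v = valShift s.2 t ∧ v ∈ g ∧
        φ' = liftConstraint v φ then B3.must
    else if ∃ g φ t, 𝒜.T s.1 g a φ ≠ B3.bot ∧ v = valShift s.2 t ∧ v ∈ g ∧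
        φ' = liftConstraint v φ then B3.may
    else B3.bot

/-- Reachability in an `RAPA`. -/
inductive RAPA.Reach {S A X AP : Type} (N : RAPA S A X AP) : S → Prop
  | init : RAPA.Reach N N.init
  | step {s : S} {v : Val X} {a : A} {φ : Set (PMF (Set X × S))} {μ : PMF (Set X × S)}
      {Y : Set X} {s' : S} :
      RAPA.Reach N s → N.T s v a φ ≠ B3.bot → μ ∈ φ → μ (Y, s') ≠ 0 → RAPA.Reach N s'

/-- The region APA `R(𝒜)` of an APTA `𝒜`. -/
def APTA.region {L A X AP : Type} (𝒜 : APTA L A X AP) : RAPA (L × Val X) A X AP where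
  init := 𝒜.regionPre.init
  V := 𝒜.regionPre.V
  T := fun s v a φ => if 𝒜.regionPre.Reach s then 𝒜.regionPre.T s v a φ else B3.bot

/-- The operator `𝒯` interpreting a PA over the alphabet
`Θ(X) × A × (2^X)^S` as a PTA. -/
def RPA.toPTA {S A X AP : Type} (P : RPA S A X AP) : PTA S A X AP where
  init := P.init
  V := P.V
  T := fun s g a μ => ∃ v, g = {v} ∧ P.T s v a μ

/-! ### Normal form -/

/-- The PTA `(𝒯 ∘ R)(M)` (fused). -/
def PTA.nf {L A X AP : Type} (M : PTA L A X AP) : PTA (L × Val X) A X AP where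
  init := (M.init, valZero X)
  V := fun s => M.V s.1
  T := fun s g a μ' => ∃ g₀ μ t, M.T s.1 g₀ a μ ∧ valShift s.2 t ∈ g₀ ∧
        g = {valShift s.2 t} ∧
        μ' = μ.map (fun p => (p.1, (p.2, valReset (valShift s.2 t) p.1)))

/-- Reachability of locations in a PTA. -/
inductive PTA.ReachLoc {L A X AP : Type} (M : PTA L A X AP) : L → Prop
  | init : PTA.ReachLoc M M.init
  | step {l : L} {g : Guard X} {a : A} {μ : PMF (Set X × L)} {Y : Set X} {l' : L} :
      PTA.ReachLoc M l → M.T l g a μ → μ (Y, l') ≠ 0 → PTA.ReachLoc M l'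

/-- A PTA is in normal form iff it is isomorphic to the reachable part
of `(𝒯 ∘ R)(M)`. -/
def PTA.NormalForm {L A X AP : Type} (M : PTA L A X AP) : Prop :=
  ∃ e : L → L × Val X, Function.Injective e ∧
    (∀ s, M.nf.ReachLoc s ↔ s ∈ Set.range e) ∧
    e M.init = M.nf.init ∧
    (∀ l, M.V l = M.nf.V (e l)) ∧
    (∀ l g a μ, M.T l g a μ ↔ M.nf.T (e l) g a (μ.map (Prod.map id e)))

/-! ### The lifting `⋐_R` of a relation to distributions -/

/-- `μ ⋐_R μ'`: lifting of `R` to distributions over reset-set/state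
pairs, via a correspondence (weight) function. -/
def distLift {X S S' : Type} (R : S → S' → Prop)
    (μ : PMF (Set X × S)) (μ' : PMF (Set X × S')) : Prop :=
  ∃ δ : Set X × S → Set X × S' → ℝ≥0∞,
    (∀ p, μ p ≠ 0 → ∑' q, δ p q = 1) ∧
    (∀ q, μ' q = ∑' p, μ p * δ p q) ∧
    (∀ p q, δ p q ≠ 0 → p.1 = q.1 ∧ R p.2 q.2)

/-- Lifting with a fixed correspondence function (used for strong
refinement). -/
def distLiftVia {X S S' : Type} (R : S → S' → Prop)
    (δ : Set X × S → Set X × S' → ℝ≥0∞)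
    (μ : PMF (Set X × S)) (μ' : PMF (Set X × S')) : Prop :=
  (∀ q, μ' q = ∑' p, μ p * δ p q) ∧
  (∀ p q, δ p q ≠ 0 → p.1 = q.1 ∧ R p.2 q.2)

/-! ### APA satisfaction and refinement (at the region level) -/

/-- Satisfaction relation between a PA and an APA. -/
def RPA.SatRel {S S' A X AP : Type} (M : RPA S A X AP) (N : RAPA S' A X AP)
    (R : S → S' → Prop) : Prop :=
  ∀ s s', R s s' →
    ((∀ v a φ', N.T s' v a φ' = B3.must →
        ∃ μ, M.T s v a μ ∧ ∃ μ' ∈ φ', distLift R μ μ') ∧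
     (∀ v a μ, M.T s v a μ →
        ∃ φ', N.T s' v a φ' ≠ B3.bot ∧ ∃ μ' ∈ φ', distLift R μ μ') ∧
     M.V s ∈ N.V s')

/-- `M ⊨ N` for a PA `M` and an APA `N`. -/
def RPA.Sat {S S' A X AP : Type} (M : RPA S A X AP) (N : RAPA S' A X AP) : Prop :=
  ∃ R, M.SatRel N R ∧ R M.init N.init

/-- Weak refinement relation between APAs. -/
def RAPA.WeakRefRel {S1 S2 A X AP : Type} (N1 : RAPA S1 A X AP) (N2 : RAPA S2 A X AP)
    (R : S1 → S2 → Prop) : Prop :=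
  ∀ s1 s2, R s1 s2 →
    ((∀ v a φ2, N2.T s2 v a φ2 = B3.must →
        ∃ φ1, N1.T s1 v a φ1 = B3.must ∧ ∀ μ1 ∈ φ1, ∃ μ2 ∈ φ2, distLift R μ1 μ2) ∧
     (∀ v a φ1, N1.T s1 v a φ1 ≠ B3.bot →
        ∃ φ2, N2.T s2 v a φ2 ≠ B3.bot ∧ ∀ μ1 ∈ φ1, ∃ μ2 ∈ φ2, distLift R μ1 μ2) ∧
     N1.V s1 ⊆ N2.V s2)

/-- Weak refinement `N1 ≼_W N2` of APAs. -/
def RAPA.WeakRef {S1 S2 A X AP : Type} (N1 : RAPA S1 A X AP) (N2 : RAPA S2 A X AP) : Prop :=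
  ∃ R, N1.WeakRefRel N2 R ∧ R N1.init N2.init

/-- Strong refinement relation between APAs: the correspondence
function is fixed per pair of transitions, uniformly over all
distributions. -/
def RAPA.StrongRefRel {S1 S2 A X AP : Type} (N1 : RAPA S1 A X AP) (N2 : RAPA S2 A X AP)
    (R : S1 → S2 → Prop) : Prop :=
  ∀ s1 s2, R s1 s2 →
    ((∀ v a φ2, N2.T s2 v a φ2 = B3.must →
        ∃ φ1, N1.T s1 v a φ1 = B3.must ∧
          ∃ δ, (∀ p, ∑' q, δ p q = 1) ∧
            ∀ μ1 ∈ φ1, ∃ μ2 ∈ φ2, distLiftVia R δ μ1 μ2) ∧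
     (∀ v a φ1, N1.T s1 v a φ1 ≠ B3.bot →
        ∃ φ2, N2.T s2 v a φ2 ≠ B3.bot ∧
          ∃ δ, (∀ p, ∑' q, δ p q = 1) ∧
            ∀ μ1 ∈ φ1, ∃ μ2 ∈ φ2, distLiftVia R δ μ1 μ2) ∧
     N1.V s1 ⊆ N2.V s2)

/-- Strong refinement `N1 ≼_S N2` of APAs. -/
def RAPA.StrongRef {S1 S2 A X AP : Type} (N1 : RAPA S1 A X AP) (N2 : RAPA S2 A X AP) : Prop :=
  ∃ R, N1.StrongRefRel N2 R ∧ R N1.init N2.init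

/-- Mutual weak refinement `≡`. -/
def RAPA.Equiv {S1 S2 A X AP : Type} (N1 : RAPA S1 A X AP) (N2 : RAPA S2 A X AP) : Prop :=
  N1.WeakRef N2 ∧ N2.WeakRef N1

/-! ### APTA satisfaction and refinements -/

/-- Satisfaction relation between a PTA in normal form and an APTA
(Def. "APTA Satisfaction"). -/
def APTA.SatRel {L L' A X AP : Type} (M : PTA L A X AP) (𝒜 : APTA L' A X AP)
    (R : L → L' → Prop) : Prop :=
  ∀ l l', R l l' →
    ((∀ (a : A) (φ' : Set (PMF (Set X × L'))) (g : Guard X) (θ : Val X),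
        𝒜.T l' g a φ' = B3.must →
        M.regionPre.Reach (l, θ) → 𝒜.regionPre.Reach (l', θ) →
        ∃ (n : ℕ) (gs : Fin n → Guard X) (μs : Fin n → PMF (Set X × L)),
          (∀ t : ℝ≥0, valShift θ t ∈ g → ∃ i, valShift θ t ∈ gs i) ∧
          (∀ i, M.T l (gs i) a (μs i) ∧ ∃ μ' ∈ φ', distLift R (μs i) μ')) ∧
     (∀ (a : A) (μ : PMF (Set X × L)) (g : Guard X),
        M.T l g a μ →
        ∃ (g' : Guard X) (φ' : Set (PMF (Set X × L'))),
          𝒜.T l' g' a φ' ≠ B3.bot ∧ g ⊆ g' ∧ ∃ μ' ∈ φ', distLift R μ μ') ∧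
     M.V l ∈ 𝒜.V l')

/-- `M ⊨ 𝒜` for a PTA `M` and an APTA `𝒜`. -/
def APTA.Sat {L L' A X AP : Type} (M : PTA L A X AP) (𝒜 : APTA L' A X AP) : Prop :=
  ∃ R, APTA.SatRel M 𝒜 R ∧ R M.init 𝒜.init

/-- An implementation of an APTA is a PTA in normal form satisfying it. -/
def APTA.Implements {L L' A X AP : Type} (M : PTA L A X AP) (𝒜 : APTA L' A X AP) : Prop :=
  M.NormalForm ∧ APTA.Sat M 𝒜

/-- Thorough refinement `𝒜1 ≼_T 𝒜2`: inclusion of implementation sets. -/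
def APTA.Thorough {L1 L2 A X AP : Type} (𝒜1 : APTA L1 A X AP) (𝒜2 : APTA L2 A X AP) : Prop :=
  ∀ (L' : Type) (M : PTA L' A X AP), APTA.Implements M 𝒜1 → APTA.Implements M 𝒜2

/-- Weak refinement `𝒜1 ≼_W 𝒜2` of APTAs: weak refinement of the region APAs. -/
def APTA.WeakRef {L1 L2 A X AP : Type} (𝒜1 : APTA L1 A X AP) (𝒜2 : APTA L2 A X AP) : Prop :=
  RAPA.WeakRef 𝒜1.region 𝒜2.region

/-- Strong refinement `𝒜1 ≼_S 𝒜2` of APTAs: strong refinement of the region APAs. -/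
def APTA.StrongRef {L1 L2 A X AP : Type} (𝒜1 : APTA L1 A X AP) (𝒜2 : APTA L2 A X AP) : Prop :=
  RAPA.StrongRef 𝒜1.region 𝒜2.region

/-! ### Consistency and pruning -/

/-- A location is consistent if its admissible labeling is nonempty and
all must-edges from it have satisfiable constraints. -/
def APTA.ConsistentLoc {L A X AP : Type} (𝒜 : APTA L A X AP) (l : L) : Prop :=
  𝒜.V l ≠ ∅ ∧ ∀ g a φ, 𝒜.T l g a φ = B3.must → φ.Nonempty

/-- Restricting a constraint to distributions that avoid inconsistent
locations. -/
def APTA.pruneConstraint {L A X AP : Type} (𝒜 : APTA L A X AP)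
    (φ : Set (PMF (Set X × L))) : Set (PMF (Set X × L)) :=
  {μ ∈ φ | ∀ Y l', ¬ 𝒜.ConsistentLoc l' → μ (Y, l') = 0}

/-- The pruning operator `β`. -/
def APTA.prune {L A X AP : Type} (𝒜 : APTA L A X AP) : APTA L A X AP where
  init := 𝒜.init
  V := fun l => if 𝒜.ConsistentLoc l then 𝒜.V l else ∅
  T := fun l g a φ' =>
    if 𝒜.ConsistentLoc l ∧ ∃ φ, 𝒜.T l g a φ = B3.must ∧ φ' = 𝒜.pruneConstraint φ
    then B3.must
    else if 𝒜.ConsistentLoc l ∧ ∃ φ, 𝒜.T l g a φ = B3.may ∧ φ' = 𝒜.pruneConstraint φ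
    then B3.may
    else B3.bot

/-- `β*`: the fixpoint of `β`, reached after finitely many iterations
(at most `|L| + 1`). -/
def APTA.pruneStar {L A X AP : Type} [Fintype L] (𝒜 : APTA L A X AP) : APTA L A X AP :=
  (fun B : APTA L A X AP => B.prune)^[Fintype.card L + 1] 𝒜

/-! ### Time divergence -/

/-- Infinite paths of a PTA. -/
structure PTA.InfPath {L A X AP : Type} (M : PTA L A X AP) where
  loc : ℕ → L
  val : ℕ → Val X
  del : ℕ → ℝ≥0
  init_loc : loc 0 = M.init
  init_val : val 0 = valZero X
  step : ∀ n, ∃ g a μ Y, M.T (loc n) g a μ ∧ valShift (val n) (del n) ∈ g ∧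
    μ (Y, loc (n + 1)) ≠ 0 ∧ val (n + 1) = valReset (valShift (val n) (del n)) Y

/-- Strict divergence: time diverges along every infinite path. -/
def PTA.StrictDivergent {L A X AP : Type} (M : PTA L A X AP) : Prop :=
  ∀ π : M.InfPath, ∀ c : ℝ≥0, ∃ n, c < ∑ i ∈ Finset.range n, π.del i

/-- Schedulers: given the history (configurations and delays) and the
current configuration, choose a delay and a probabilistic edge. -/
def Sched (L A X : Type) :=
  List ((L × Val X) × ℝ≥0) → (L × Val X) → ℝ≥0 × Guard X × A × PMF (Set X × L)

/-- A scheduler is valid if it always chooses an enabled edge of `M`. -/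
def ValidSched {L A X AP : Type} (M : PTA L A X AP) (σ : Sched L A X) : Prop :=
  ∀ h c, M.T c.1 (σ h c).2.1 (σ h c).2.2.1 (σ h c).2.2.2 ∧
    valShift c.2 (σ h c).1 ∈ (σ h c).2.1

/-- One scheduler step. -/
def schedStep {L A X : Type} (σ : Sched L A X)
    (x : List ((L × Val X) × ℝ≥0) × (L × Val X)) :
    PMF (List ((L × Val X) × ℝ≥0) × (L × Val X)) :=
  ((σ x.1 x.2).2.2.2).map fun p =>
    (x.1 ++ [(x.2, (σ x.1 x.2).1)], (p.2, valReset (valShift x.2.2 (σ x.1 x.2).1) p.1))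

/-- The distribution over histories after `n` scheduler steps. -/
def runPMF {L A X AP : Type} (M : PTA L A X AP) (σ : Sched L A X) :
    ℕ → PMF (List ((L × Val X) × ℝ≥0) × (L × Val X))
  | 0 => PMF.pure ([], (M.init, valZero X))
  | n + 1 => (runPMF M σ n).bind (schedStep σ)

/-- Total time elapsed along a history. -/
def elapsed {L X : Type} (h : List ((L × Val X) × ℝ≥0)) : ℝ≥0 :=
  (h.map Prod.snd).sum

/-- Probabilistic divergence: under every (valid) scheduler, time
diverges with probability 1; equivalently, for every bound `c` the
probability that at most `c` time units have elapsed after `n` steps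
tends to `0`. -/
def PTA.ProbDivergent {L A X AP : Type} (M : PTA L A X AP) : Prop :=
  ∀ σ : Sched L A X, ValidSched M σ → ∀ c : ℝ≥0,
    Filter.Tendsto (fun n => (runPMF M σ n).toOuterMeasure {x | elapsed x.1 ≤ c})
      Filter.atTop (nhds 0)

/-- Sd-thorough refinement: inclusion of the sets of strict divergent
implementations. -/
def APTA.ThoroughSd {L1 L2 A X AP : Type} (𝒜1 : APTA L1 A X AP) (𝒜2 : APTA L2 A X AP) : Prop :=
  ∀ (L' : Type) (M : PTA L' A X AP),
    (APTA.Implements M 𝒜1 ∧ M.StrictDivergent) → (APTA.Implements M 𝒜2 ∧ M.StrictDivergent)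

/-- Pd-thorough refinement: inclusion of the sets of probabilistic
divergent implementations. -/
def APTA.ThoroughPd {L1 L2 A X AP : Type} (𝒜1 : APTA L1 A X AP) (𝒜2 : APTA L2 A X AP) : Prop :=
  ∀ (L' : Type) (M : PTA L' A X AP),
    (APTA.Implements M 𝒜1 ∧ M.ProbDivergent) → (APTA.Implements M 𝒜2 ∧ M.ProbDivergent)

/-! ### PTAs as APTAs, and probabilistic time-abstracting bisimulation -/

/-- A PTA viewed as an APTA: only must-edges, point-valued labelings,
constraints with singleton satisfaction sets. -/
def PTA.toAPTA {L A X AP : Type} (M : PTA L A X AP) : APTA L A X AP where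
  init := M.init
  V := fun l => {M.V l}
  T := fun l g a φ => if ∃ μ, M.T l g a μ ∧ φ = {μ} then B3.must else B3.bot

/-- Disjoint union of two PTAs. -/
def PTA.sum {L1 L2 A X AP : Type} (M1 : PTA L1 A X AP) (M2 : PTA L2 A X AP) :
    PTA (L1 ⊕ L2) A X AP where
  init := Sum.inl M1.init
  V := Sum.elim M1.V M2.V
  T := fun l g a μ =>
    (∃ l1 μ1, l = Sum.inl l1 ∧ M1.T l1 g a μ1 ∧ μ = μ1.map (Prod.map id Sum.inl)) ∨
    (∃ l2 μ2, l = Sum.inr l2 ∧ M2.T l2 g a μ2 ∧ μ = μ2.map (Prod.map id Sum.inr))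

/-- A set of configurations is closed under an equivalence. -/
def EClosed {C : Type} (E : C → C → Prop) (s : Set C) : Prop :=
  ∀ x y, E x y → (x ∈ s ↔ y ∈ s)

/-- Probabilistic time-abstracting bisimulations on the configurations
of a PTA. -/
def PTA.IsBisim {L A X AP : Type} (M : PTA L A X AP)
    (E : (L × Val X) → (L × Val X) → Prop) : Prop :=
  Equivalence E ∧
  ∀ c c', E c c' →
    (M.V c.1 = M.V c'.1 ∧
     ∀ (g : Guard X) (a : A) (μ : PMF (Set X × L)) (t : ℝ≥0),
       M.T c.1 g a μ → valShift c.2 t ∈ g →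
       ∃ (g' : Guard X) (μ' : PMF (Set X × L)) (t' : ℝ≥0),
         M.T c'.1 g' a μ' ∧ valShift c'.2 t' ∈ g' ∧
         ∀ s : Set (L × Val X), EClosed E s →
           ((μ.map fun p => (p.2, valReset (valShift c.2 t) p.1)).toOuterMeasure s =
            (μ'.map fun p => (p.2, valReset (valShift c'.2 t') p.1)).toOuterMeasure s))

/-- `M1 ∼ M2`: probabilistic time-abstracting bisimilarity. -/
def PTA.Bisimilar {L1 L2 A X AP : Type} (M1 : PTA L1 A X AP) (M2 : PTA L2 A X AP) : Prop :=
  ∃ E, (M1.sum M2).IsBisim E ∧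
    E (Sum.inl M1.init, valZero X) (Sum.inr M2.init, valZero X)

/-! ### Determinism -/

/-- Action-determinism: transitions of a reachable region state on the
same action with different constraints have disjoint regions. -/
def APTA.ActionDet {L A X AP : Type} (𝒜 : APTA L A X AP) : Prop :=
  ∀ s v1 v2 a φ1 φ2, 𝒜.region.T s v1 a φ1 ≠ B3.bot → 𝒜.region.T s v2 a φ2 ≠ B3.bot →
    φ1 ≠ φ2 → v1 ≠ v2

/-- AP-determinism. -/
def APTA.APDet {L A X AP : Type} (𝒜 : APTA L A X AP) : Prop :=
  ∀ s v a φ, 𝒜.region.T s v a φ ≠ B3.bot →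
    ∀ μ' ∈ φ, ∀ μ'' ∈ φ, ∀ (Y' : Set X) s' (Y'' : Set X) s'', s' ≠ s'' →
      μ' (Y', s') ≠ 0 → μ'' (Y'', s'') ≠ 0 → 𝒜.region.V s' ∩ 𝒜.region.V s'' = ∅

def APTA.Deterministic {L A X AP : Type} (𝒜 : APTA L A X AP) : Prop :=
  𝒜.ActionDet ∧ 𝒜.APDet

/-! ### Abstraction for APTAs -/

/-- The common guard `g(l̃, a)` of the must-edges of all concretizations
of `l̃`. -/
def APTA.commonGuard {L Lt A X AP : Type} (𝒜 : APTA L A X AP) (α : L → Lt)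
    (lt : Lt) (a : A) : Guard X :=
  if ∀ l, α l = lt → ∃ g φ, 𝒜.T l g a φ = B3.must
  then ⋂₀ {g | ∃ l, α l = lt ∧ ∃ φ, 𝒜.T l g a φ = B3.must}
  else ∅

/-- The pre-processing `𝒫_α`: every must-edge is split along the common
guard and its computed negation. -/
def APTA.preprocess {L Lt A X AP : Type} (𝒜 : APTA L A X AP) (α : L → Lt) :
    APTA L A X AP where
  init := 𝒜.init
  V := 𝒜.V
  T := fun l g a φ =>
    if ∃ g₀, 𝒜.T l g₀ a φ = B3.must ∧
        (g = 𝒜.commonGuard α (α l) a ∨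
         ∃ g' ∈ Guard.negSet (𝒜.commonGuard α (α l) a), g = g₀ ∩ g')
    then B3.must
    else if 𝒜.T l g a φ = B3.may then B3.may
    else B3.bot

/-- APTA abstraction (applied to a pre-processed APTA). -/
def APTA.abstr {L Lt A X AP : Type} (𝒜 : APTA L A X AP) (α : L → Lt) :
    APTA Lt A X AP where
  init := α 𝒜.init
  V := fun lt => {P | ∃ l, α l = lt ∧ P ∈ 𝒜.V l}
  T := fun lt g a φt =>
    if g = 𝒜.commonGuard α lt a ∧
        φt = (fun μ => μ.map (Prod.map id α)) ''
          ⋃₀ {φ | ∃ l, α l = lt ∧ 𝒜.T l g a φ = B3.must}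
    then B3.must
    else if g ≠ 𝒜.commonGuard α lt a ∧ (∃ l φ, α l = lt ∧ 𝒜.T l g a φ ≠ B3.bot) ∧
        φt = (fun μ => μ.map (Prod.map id α)) ''
          ⋃₀ {φ | ∃ l, α l = lt ∧ 𝒜.T l g a φ ≠ B3.bot}
    then B3.may
    else B3.bot

/-- Pre-processing at the APA level. Since every transition of a region
APA is guarded by a single region, guard splitting is trivial there. -/
def RAPA.preprocess {S St A X AP : Type} (N : RAPA S A X AP) (_α : S → St) :
    RAPA S A X AP := N

/-- APA abstraction (cf. DKLLPSW11): must if all concretizations have a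
must-transition with the given label, may if some has a non-⊥ one. -/
def RAPA.abstr {S St A X AP : Type} (N : RAPA S A X AP) (α : S → St) :
    RAPA St A X AP where
  init := α N.init
  V := fun st => {P | ∃ s, α s = st ∧ P ∈ N.V s}
  T := fun st v a φt =>
    if (∀ s, α s = st → ∃ φ, N.T s v a φ = B3.must) ∧
        φt = (fun μ => μ.map (Prod.map id α)) ''
          ⋃₀ {φ | ∃ s, α s = st ∧ N.T s v a φ = B3.must}
    then B3.must
    else if ¬ (∀ s, α s = st → ∃ φ, N.T s v a φ = B3.must) ∧
        (∃ s φ, α s = st ∧ N.T s v a φ ≠ B3.bot) ∧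
        φt = (fun μ => μ.map (Prod.map id α)) ''
          ⋃₀ {φ | ∃ s, α s = st ∧ N.T s v a φ ≠ B3.bot}
    then B3.may
    else B3.bot

/-! ### Abstract probabilistic event-clock automata -/

/-- Abstract probabilistic event-clock automata: one clock `x_a` per
action `a` (so the clock set is identified with the action set `A`),
and probability constraints directly over locations. -/
structure APECA (L A AP : Type) where
  V : L → Set (Set AP)
  T : L → Guard A → A → Set (PMF L) → B3
  init : L

/-- Completeness of the edge function: for every location and action the
guards of the non-⊥ edges cover `true`. -/
def APECA.Complete {L A AP : Type} (E : APECA L A AP) : Prop :=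
  ∀ l a (v : Val A), ∃ g φ, E.T l g a φ ≠ B3.bot ∧ v ∈ g

/-- An APECA as an APTA: the occurrence of `a` resets exactly the clock
`x_a`. -/
def APECA.toAPTA {L A AP : Type} (E : APECA L A AP) : APTA L A A AP where
  init := E.init
  V := E.V
  T := fun l g a φh =>
    if ∃ φ, E.T l g a φ = B3.must ∧
        φh = (fun μ => μ.map fun l' => (({a} : Set A), l')) '' φ
    then B3.must
    else if ∃ φ, E.T l g a φ = B3.may ∧
        φh = (fun μ => μ.map fun l' => (({a} : Set A), l')) '' φ
    then B3.may
    else B3.bot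

/-- The region APA of an APECA. -/
def APECA.region {L A AP : Type} (E : APECA L A AP) : RAPA (L × Val A) A A AP :=
  E.toAPTA.region

/-- Weak refinement of APECAs: weak APA refinement of the region APAs. -/
def APECA.WeakRef {L1 L2 A AP : Type} (E1 : APECA L1 A AP) (E2 : APECA L2 A AP) : Prop :=
  RAPA.WeakRef E1.region E2.region

/-- Action-determinism for APECAs. -/
def APECA.ActionDet {L A AP : Type} (E : APECA L A AP) : Prop :=
  ∀ s v1 v2 a φ1 φ2, E.region.T s v1 a φ1 ≠ B3.bot → E.region.T s v2 a φ2 ≠ B3.bot →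
    φ1 ≠ φ2 → v1 ≠ v2

/-- Consistency: existence of at least one implementation. -/
def APECA.Consistent {L A AP : Type} (E : APECA L A AP) : Prop :=
  ∃ (L' : Type) (M : PTA L' A A AP), APTA.Implements M E.toAPTA

/-- Implementation of an APECA. -/
def APECA.Implements {L' L A AP : Type} (M : PTA L' A A AP) (E : APECA L A AP) : Prop :=
  APTA.Implements M E.toAPTA

/-- Disjointness of the atomic-proposition alphabets of two APECAs. -/
def APDisjoint {L1 L2 A AP : Type} (E1 : APECA L1 A AP) (E2 : APECA L2 A AP) : Prop :=
  ∀ l1 l2 P1 P2, P1 ∈ E1.V l1 → P2 ∈ E2.V l2 → P1 ∩ P2 = ∅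

/-! ### Conjunction -/

/-- The conjunction `φ∧` of two constraints: a distribution satisfies it
iff its marginals satisfy the component constraints. -/
def conjConstraint {L1 L2 : Type} (φ1 : Set (PMF L1)) (φ2 : Set (PMF L2)) :
    Set (PMF (L1 × L2)) :=
  {μ | μ.map Prod.fst ∈ φ1 ∧ μ.map Prod.snd ∈ φ2}

/-- Conjunction of APECAs. -/
def APECA.conj {L1 L2 A AP : Type} (E1 : APECA L1 A AP) (E2 : APECA L2 A AP) :
    APECA (L1 × L2) A AP where
  init := (E1.init, E2.init)
  V := fun p => E1.V p.1 ∩ E2.V p.2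
  T := fun p g a φ =>
    if ∃ g1 g2 φ1 φ2, E1.T p.1 g1 a φ1 ≠ B3.bot ∧ E2.T p.2 g2 a φ2 ≠ B3.bot ∧
        g = g1 ∩ g2 ∧ φ = conjConstraint φ1 φ2 ∧
        (E1.T p.1 g1 a φ1 = B3.must ∨ E2.T p.2 g2 a φ2 = B3.must)
    then B3.must
    else if ∃ g1 g2 φ1 φ2, E1.T p.1 g1 a φ1 ≠ B3.bot ∧ E2.T p.2 g2 a φ2 ≠ B3.bot ∧
        g = g1 ∩ g2 ∧ φ = conjConstraint φ1 φ2
    then B3.may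
    else B3.bot

/-- Conjunction of constraints at the region level (with reset sets). -/
def conjConstraintR {X S1 S2 : Type} (φ1 : Set (PMF (Set X × S1)))
    (φ2 : Set (PMF (Set X × S2))) : Set (PMF (Set X × (S1 × S2))) :=
  {μ | μ.map (fun p => (p.1, p.2.1)) ∈ φ1 ∧ μ.map (fun p => (p.1, p.2.2)) ∈ φ2}

/-- Conjunction of APAs (region level). -/
def RAPA.conj {S1 S2 A X AP : Type} (N1 : RAPA S1 A X AP) (N2 : RAPA S2 A X AP) :
    RAPA (S1 × S2) A X AP where
  init := (N1.init, N2.init)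
  V := fun p => N1.V p.1 ∩ N2.V p.2
  T := fun p v a φ =>
    if ∃ φ1 φ2, N1.T p.1 v a φ1 ≠ B3.bot ∧ N2.T p.2 v a φ2 ≠ B3.bot ∧
        φ = conjConstraintR φ1 φ2 ∧
        (N1.T p.1 v a φ1 = B3.must ∨ N2.T p.2 v a φ2 = B3.must)
    then B3.must
    else if ∃ φ1 φ2, N1.T p.1 v a φ1 ≠ B3.bot ∧ N2.T p.2 v a φ2 ≠ B3.bot ∧
        φ = conjConstraintR φ1 φ2
    then B3.may
    else B3.bot

/-! ### Pruning for APECAs -/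

def APECA.ConsistentLoc {L A AP : Type} (E : APECA L A AP) (l : L) : Prop :=
  E.V l ≠ ∅ ∧ ∀ g a φ, E.T l g a φ = B3.must → φ.Nonempty

def APECA.pruneConstraint {L A AP : Type} (E : APECA L A AP) (φ : Set (PMF L)) :
    Set (PMF L) :=
  {μ ∈ φ | ∀ l', ¬ E.ConsistentLoc l' → μ l' = 0}

def APECA.prune {L A AP : Type} (E : APECA L A AP) : APECA L A AP where
  init := E.init
  V := fun l => if E.ConsistentLoc l then E.V l else ∅
  T := fun l g a φ' =>
    if E.ConsistentLoc l ∧ ∃ φ, E.T l g a φ = B3.must ∧ φ' = E.pruneConstraint φ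
    then B3.must
    else if E.ConsistentLoc l ∧ ∃ φ, E.T l g a φ = B3.may ∧ φ' = E.pruneConstraint φ
    then B3.may
    else B3.bot

def APECA.pruneStar {L A AP : Type} [Fintype L] (E : APECA L A AP) : APECA L A AP :=
  (fun B : APECA L A AP => B.prune)^[Fintype.card L + 1] E

/-! ### Parallel composition -/

/-- The parallel constraint `φ∥`: product distributions of satisfying
pairs. -/
def parConstraint {L1 L2 : Type} (φ1 : Set (PMF L1)) (φ2 : Set (PMF L2)) :
    Set (PMF (L1 × L2)) :=
  {μ | ∃ μ1 ∈ φ1, ∃ μ2 ∈ φ2, ∀ k1 k2, μ (k1, k2) = μ1 k1 * μ2 k2}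

/-- Parallel composition of APECAs (over the same action set). -/
def APECA.par {L1 L2 A AP : Type} (E1 : APECA L1 A AP) (E2 : APECA L2 A AP) :
    APECA (L1 × L2) A AP where
  init := (E1.init, E2.init)
  V := fun p => {Q | ∃ P1 ∈ E1.V p.1, ∃ P2 ∈ E2.V p.2, Q = P1 ∪ P2}
  T := fun p g a φ =>
    if ∃ g1 g2 φ1 φ2, E1.T p.1 g1 a φ1 = B3.must ∧ E2.T p.2 g2 a φ2 = B3.must ∧
        g = g1 ∩ g2 ∧ φ = parConstraint φ1 φ2
    then B3.must
    else if ∃ g1 g2 φ1 φ2, E1.T p.1 g1 a φ1 ≠ B3.bot ∧ E2.T p.2 g2 a φ2 ≠ B3.bot ∧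
        g = g1 ∩ g2 ∧ φ = parConstraint φ1 φ2
    then B3.may
    else B3.bot

/-- Parallel constraint at the region level: products, with resets
combined by union. -/
def parConstraintR {X S1 S2 : Type} (φ1 : Set (PMF (Set X × S1)))
    (φ2 : Set (PMF (Set X × S2))) : Set (PMF (Set X × (S1 × S2))) :=
  {μ | ∃ μ1 ∈ φ1, ∃ μ2 ∈ φ2,
    μ = μ1.bind fun p => μ2.map fun q => (p.1 ∪ q.1, (p.2, q.2))}

/-- Parallel composition of APAs (region level). -/
def RAPA.par {S1 S2 A X AP : Type} (N1 : RAPA S1 A X AP) (N2 : RAPA S2 A X AP) :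
    RAPA (S1 × S2) A X AP where
  init := (N1.init, N2.init)
  V := fun p => {Q | ∃ P1 ∈ N1.V p.1, ∃ P2 ∈ N2.V p.2, Q = P1 ∪ P2}
  T := fun p v a φ =>
    if ∃ φ1 φ2, N1.T p.1 v a φ1 = B3.must ∧ N2.T p.2 v a φ2 = B3.must ∧
        φ = parConstraintR φ1 φ2
    then B3.must
    else if ∃ φ1 φ2, N1.T p.1 v a φ1 ≠ B3.bot ∧ N2.T p.2 v a φ2 ≠ B3.bot ∧
        φ = parConstraintR φ1 φ2
    then B3.may
    else B3.bot

/-! ### Abstraction for APECAs -/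

def APECA.commonGuard {L Lt A AP : Type} (E : APECA L A AP) (α : L → Lt)
    (lt : Lt) (a : A) : Guard A :=
  if ∀ l, α l = lt → ∃ g φ, E.T l g a φ = B3.must
  then ⋂₀ {g | ∃ l, α l = lt ∧ ∃ φ, E.T l g a φ = B3.must}
  else ∅

def APECA.preprocess {L Lt A AP : Type} (E : APECA L A AP) (α : L → Lt) :
    APECA L A AP where
  init := E.init
  V := E.V
  T := fun l g a φ =>
    if ∃ g₀, E.T l g₀ a φ = B3.must ∧
        (g = E.commonGuard α (α l) a ∨
         ∃ g' ∈ Guard.negSet (E.commonGuard α (α l) a), g = g₀ ∩ g')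
    then B3.must
    else if E.T l g a φ = B3.may then B3.may
    else B3.bot

def APECA.abstr {L Lt A AP : Type} (E : APECA L A AP) (α : L → Lt) :
    APECA Lt A AP where
  init := α E.init
  V := fun lt => {P | ∃ l, α l = lt ∧ P ∈ E.V l}
  T := fun lt g a φt =>
    if g = E.commonGuard α lt a ∧
        φt = (fun μ => μ.map α) '' ⋃₀ {φ | ∃ l, α l = lt ∧ E.T l g a φ = B3.must}
    then B3.must
    else if g ≠ E.commonGuard α lt a ∧ (∃ l φ, α l = lt ∧ E.T l g a φ ≠ B3.bot) ∧
        φt = (fun μ => μ.map α) '' ⋃₀ {φ | ∃ l, α l = lt ∧ E.T l g a φ ≠ B3.bot}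
    then B3.may
    else B3.bot

end


/-! ### Auxiliary lemmas for Lemma 2 -/

section RegionConjAux

open scoped Classical

/-! #### B3 helpers -/

lemma b3_ite_ne_bot {c1 c2 : Prop} [Decidable c1] [Decidable c2] :
    (if c1 then B3.must else if c2 then B3.may else B3.bot) ≠ B3.bot ↔ c1 ∨ c2 := by
  split_ifs with h1 h2 <;> simp_all

lemma b3_ite_eq_must {c1 c2 : Prop} [Decidable c1] [Decidable c2] :
    (if c1 then B3.must else if c2 then B3.may else B3.bot) = B3.must ↔ c1 := by
  split_ifs with h1 h2 <;> simp_all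

/-! #### PMF helpers -/

lemma pmf_map_congr {α β : Type} (μ : PMF α) {f g : α → β}
    (h : ∀ a, μ a ≠ 0 → f a = g a) : μ.map f = μ.map g := by
  ext b
  simp only [PMF.map_apply]
  refine tsum_congr fun a => ?_
  by_cases ha : μ a = 0
  · simp [ha]
  · rw [h a ha]

lemma pmf_map_apply_ne {α β : Type} (μ : PMF α) (f : α → β) {x : α} (hx : μ x ≠ 0) :
    μ.map f (f x) ≠ 0 := by
  have hmem : f x ∈ (μ.map f).support := by
    rw [PMF.support_map]
    exact ⟨x, (PMF.mem_support_iff μ x).2 hx, rfl⟩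
  exact (PMF.mem_support_iff _ _).1 hmem

lemma pmf_map_ne_zero_elim {α β : Type} (μ : PMF α) (f : α → β) {y : β}
    (hy : (μ.map f) y ≠ 0) : ∃ x, μ x ≠ 0 ∧ y = f x := by
  have hmem : y ∈ (μ.map f).support := (PMF.mem_support_iff _ _).2 hy
  rw [PMF.support_map] at hmem
  obtain ⟨x, hx, hxy⟩ := hmem
  exact ⟨x, (PMF.mem_support_iff μ x).1 hx, hxy.symm⟩

lemma distLift_map {X S S' : Type} (R : S → S' → Prop) (μ : PMF (Set X × S))
    (f : Set X × S → Set X × S')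
    (h : ∀ p, μ p ≠ 0 → (f p).1 = p.1 ∧ R p.2 (f p).2) :
    distLift R μ (μ.map f) := by
  refine ⟨fun p q => if μ p ≠ 0 ∧ q = f p then 1 else 0, ?_, ?_, ?_⟩
  · intro p hp
    have he : (fun q => if μ p ≠ 0 ∧ q = f p then (1 : ℝ≥0∞) else 0)
        = fun q => if q = f p then 1 else 0 := by
      funext q; simp [hp]
    rw [he]
    exact tsum_ite_eq (f p) 1
  · intro q
    rw [PMF.map_apply]
    refine tsum_congr fun p => ?_
    by_cases hp : μ p = 0
    · simp [hp]
    · by_cases hq : q = f p <;> simp [hp, hq]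
  · intro p q hpq
    by_cases hc : μ p ≠ 0 ∧ q = f p
    · obtain ⟨hne, rfl⟩ := hc
      exact ⟨(h p hne).1.symm, (h p hne).2⟩
    · simp [hc] at hpq

/-! #### Images and lifted constraints -/

/-- The image constraint used in `APECA.toAPTA`. -/
def im {L A : Type} (a : A) (ψ : Set (PMF L)) : Set (PMF (Set A × L)) :=
  (fun μ => μ.map fun l' => (({a} : Set A), l')) '' ψ

/-- Embedding of a location into reset-set/region-state pairs. -/
noncomputable def emb {L A : Type} (a : A) (v : Val A) : L → Set A × (L × Val A) :=
  fun l => (({a} : Set A), (l, valReset v ({a} : Set A)))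

lemma lift_im {L A : Type} (a : A) (v : Val A) (ψ : Set (PMF L)) :
    liftConstraint v (im a ψ) = (fun ν => ν.map (emb a v)) '' ψ := by
  have key : ∀ ν : PMF L,
      ((ν.map fun l' => (({a} : Set A), l')).map fun p => (p.1, (p.2, valReset v p.1)))
        = ν.map (emb a v) := by
    intro ν; rw [PMF.map_comp]; rfl
  simp only [liftConstraint, im, Set.image_image, key]

/-! #### Characterizations of the transition functions -/

lemma toAPTA_ne_bot {L A AP : Type} (E : APECA L A AP) (l : L) (g : Guard A) (a : A)
    (φ : Set (PMF (Set A × L))) :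
    E.toAPTA.T l g a φ ≠ B3.bot ↔ ∃ ψ, E.T l g a ψ ≠ B3.bot ∧ φ = im a ψ := by
  simp only [APECA.toAPTA]
  rw [b3_ite_ne_bot]
  constructor
  · rintro (⟨ψ, hm, rfl⟩ | ⟨ψ, hm, rfl⟩)
    · exact ⟨ψ, by simp [hm], rfl⟩
    · exact ⟨ψ, by simp [hm], rfl⟩
  · rintro ⟨ψ, hne, rfl⟩
    cases h : E.T l g a ψ
    · exact absurd h hne
    · exact Or.inr ⟨ψ, h, rfl⟩
    · exact Or.inl ⟨ψ, h, rfl⟩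

lemma toAPTA_must {L A AP : Type} (E : APECA L A AP) (l : L) (g : Guard A) (a : A)
    (φ : Set (PMF (Set A × L))) :
    E.toAPTA.T l g a φ = B3.must ↔ ∃ ψ, E.T l g a ψ = B3.must ∧ φ = im a ψ := by
  simp only [APECA.toAPTA]
  rw [b3_ite_eq_must]
  exact Iff.rfl

lemma regionPre_ne_bot {L A X AP : Type} (𝒜 : APTA L A X AP) (l : L) (θ : Val X)
    (v : Val X) (a : A) (φ' : Set (PMF (Set X × (L × Val X)))) :
    𝒜.regionPre.T (l, θ) v a φ' ≠ B3.bot ↔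
      ∃ g φ t, 𝒜.T l g a φ ≠ B3.bot ∧ v = valShift θ t ∧ v ∈ g ∧
        φ' = liftConstraint v φ := by
  simp only [APTA.regionPre]
  rw [b3_ite_ne_bot]
  constructor
  · rintro (⟨g, φ, t, hm, hv, hg, rfl⟩ | ⟨g, φ, t, hm, hv, hg, rfl⟩)
    · exact ⟨g, φ, t, by simp [hm], hv, hg, rfl⟩
    · exact ⟨g, φ, t, hm, hv, hg, rfl⟩
  · rintro ⟨g, φ, t, hne, hv, hg, rfl⟩
    exact Or.inr ⟨g, φ, t, hne, hv, hg, rfl⟩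

lemma regionPre_must {L A X AP : Type} (𝒜 : APTA L A X AP) (l : L) (θ : Val X)
    (v : Val X) (a : A) (φ' : Set (PMF (Set X × (L × Val X)))) :
    𝒜.regionPre.T (l, θ) v a φ' = B3.must ↔
      ∃ g φ t, 𝒜.T l g a φ = B3.must ∧ v = valShift θ t ∧ v ∈ g ∧
        φ' = liftConstraint v φ := by
  simp only [APTA.regionPre]
  rw [b3_ite_eq_must]

lemma region_ne_bot' {L A X AP : Type} (𝒜 : APTA L A X AP) (s : L × Val X) (v : Val X)
    (a : A) (φ : Set (PMF (Set X × (L × Val X)))) :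
    𝒜.region.T s v a φ ≠ B3.bot ↔
      𝒜.regionPre.Reach s ∧ 𝒜.regionPre.T s v a φ ≠ B3.bot := by
  simp only [APTA.region]
  split_ifs with h <;> simp [h]

lemma region_must' {L A X AP : Type} (𝒜 : APTA L A X AP) (s : L × Val X) (v : Val X)
    (a : A) (φ : Set (PMF (Set X × (L × Val X)))) :
    𝒜.region.T s v a φ = B3.must ↔
      𝒜.regionPre.Reach s ∧ 𝒜.regionPre.T s v a φ = B3.must := by
  simp only [APTA.region]
  split_ifs with h <;> simp [h]

lemma conj_decomp {L1 L2 A AP : Type} {E1 : APECA L1 A AP} {E2 : APECA L2 A AP}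
    {p : L1 × L2} {g : Guard A} {a : A} {ψ : Set (PMF (L1 × L2))}
    (h : (E1.conj E2).T p g a ψ ≠ B3.bot) :
    ∃ g1 g2 ψ1 ψ2, E1.T p.1 g1 a ψ1 ≠ B3.bot ∧ E2.T p.2 g2 a ψ2 ≠ B3.bot ∧
      g = g1 ∩ g2 ∧ ψ = conjConstraint ψ1 ψ2 ∧
      ((E1.conj E2).T p g a ψ = B3.must →
        E1.T p.1 g1 a ψ1 = B3.must ∨ E2.T p.2 g2 a ψ2 = B3.must) := by
  cases hval : (E1.conj E2).T p g a ψ with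
  | bot => exact absurd hval h
  | may =>
    have h' := h
    simp only [APECA.conj] at h'
    rw [b3_ite_ne_bot] at h'
    rcases h' with ⟨g1, g2, ψ1, ψ2, h1, h2, hg, hψ, _⟩ | ⟨g1, g2, ψ1, ψ2, h1, h2, hg, hψ⟩ <;>
      exact ⟨g1, g2, ψ1, ψ2, h1, h2, hg, hψ,
        fun hm => absurd hm (by simp)⟩
  | must =>
    have h' := hval
    simp only [APECA.conj] at h'
    rw [b3_ite_eq_must] at h'
    obtain ⟨g1, g2, ψ1, ψ2, h1, h2, hg, hψ, hm⟩ := h'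
    exact ⟨g1, g2, ψ1, ψ2, h1, h2, hg, hψ, fun _ => hm⟩

lemma conj_build {L1 L2 A AP : Type} {E1 : APECA L1 A AP} {E2 : APECA L2 A AP}
    {p : L1 × L2} {g1 g2 : Guard A} {a : A} {ψ1 : Set (PMF L1)} {ψ2 : Set (PMF L2)}
    (h1 : E1.T p.1 g1 a ψ1 ≠ B3.bot) (h2 : E2.T p.2 g2 a ψ2 ≠ B3.bot) :
    (E1.conj E2).T p (g1 ∩ g2) a (conjConstraint ψ1 ψ2) ≠ B3.bot ∧
      ((E1.T p.1 g1 a ψ1 = B3.must ∨ E2.T p.2 g2 a ψ2 = B3.must) →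
        (E1.conj E2).T p (g1 ∩ g2) a (conjConstraint ψ1 ψ2) = B3.must) := by
  constructor
  · simp only [APECA.conj]
    rw [b3_ite_ne_bot]
    exact Or.inr ⟨g1, g2, ψ1, ψ2, h1, h2, rfl, rfl⟩
  · intro hm
    simp only [APECA.conj]
    rw [b3_ite_eq_must]
    exact ⟨g1, g2, ψ1, ψ2, h1, h2, rfl, rfl, hm⟩

lemma rconj_decomp {S1 S2 A X AP : Type} {N1 : RAPA S1 A X AP} {N2 : RAPA S2 A X AP}
    {p : S1 × S2} {v : Val X} {a : A} {φ : Set (PMF (Set X × (S1 × S2)))}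
    (h : (RAPA.conj N1 N2).T p v a φ ≠ B3.bot) :
    ∃ φ1 φ2, N1.T p.1 v a φ1 ≠ B3.bot ∧ N2.T p.2 v a φ2 ≠ B3.bot ∧
      φ = conjConstraintR φ1 φ2 ∧
      ((RAPA.conj N1 N2).T p v a φ = B3.must →
        N1.T p.1 v a φ1 = B3.must ∨ N2.T p.2 v a φ2 = B3.must) := by
  cases hval : (RAPA.conj N1 N2).T p v a φ with
  | bot => exact absurd hval h
  | may =>
    have h' := h
    simp only [RAPA.conj] at h'
    rw [b3_ite_ne_bot] at h'
    rcases h' with ⟨φ1, φ2, h1, h2, hφ, _⟩ | ⟨φ1, φ2, h1, h2, hφ⟩ <;>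
      exact ⟨φ1, φ2, h1, h2, hφ,
        fun hm => absurd hm (by simp)⟩
  | must =>
    have h' := hval
    simp only [RAPA.conj] at h'
    rw [b3_ite_eq_must] at h'
    obtain ⟨φ1, φ2, h1, h2, hφ, hm⟩ := h'
    exact ⟨φ1, φ2, h1, h2, hφ, fun _ => hm⟩

lemma rconj_build {S1 S2 A X AP : Type} {N1 : RAPA S1 A X AP} {N2 : RAPA S2 A X AP}
    {p : S1 × S2} {v : Val X} {a : A} {φ1 : Set (PMF (Set X × S1))}
    {φ2 : Set (PMF (Set X × S2))}
    (h1 : N1.T p.1 v a φ1 ≠ B3.bot) (h2 : N2.T p.2 v a φ2 ≠ B3.bot) :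
    (RAPA.conj N1 N2).T p v a (conjConstraintR φ1 φ2) ≠ B3.bot ∧
      ((N1.T p.1 v a φ1 = B3.must ∨ N2.T p.2 v a φ2 = B3.must) →
        (RAPA.conj N1 N2).T p v a (conjConstraintR φ1 φ2) = B3.must) := by
  constructor
  · simp only [RAPA.conj]
    rw [b3_ite_ne_bot]
    exact Or.inr ⟨φ1, φ2, h1, h2, rfl⟩
  · intro hm
    simp only [RAPA.conj]
    rw [b3_ite_eq_must]
    exact ⟨φ1, φ2, h1, h2, rfl, hm⟩

lemma region_decomp {L A AP : Type} (E : APECA L A AP) {l : L} {θ v : Val A} {a : A}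
    {φ : Set (PMF (Set A × (L × Val A)))} (h : E.region.T (l, θ) v a φ ≠ B3.bot) :
    E.toAPTA.regionPre.Reach (l, θ) ∧ ∃ g ψ t, E.T l g a ψ ≠ B3.bot ∧
      (E.region.T (l, θ) v a φ = B3.must → E.T l g a ψ = B3.must) ∧
      v = valShift θ t ∧ v ∈ g ∧ φ = liftConstraint v (im a ψ) := by
  have h' : E.toAPTA.region.T (l, θ) v a φ ≠ B3.bot := h
  rw [region_ne_bot'] at h'
  obtain ⟨hreach, hpre⟩ := h'
  refine ⟨hreach, ?_⟩
  cases hval : E.toAPTA.regionPre.T (l, θ) v a φ with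
  | bot => exact absurd hval hpre
  | must =>
    obtain ⟨g, φc, t, hmA, hv, hg, hφ⟩ := (regionPre_must E.toAPTA l θ v a φ).mp hval
    obtain ⟨ψ, hψm, rfl⟩ := (toAPTA_must E l g a φc).mp hmA
    exact ⟨g, ψ, t, by simp [hψm], fun _ => hψm, hv, hg, hφ⟩
  | may =>
    obtain ⟨g, φc, t, hne0, hv, hg, hφ⟩ := (regionPre_ne_bot E.toAPTA l θ v a φ).mp hpre
    obtain ⟨ψ, hψne, rfl⟩ := (toAPTA_ne_bot E l g a φc).mp hne0
    refine ⟨g, ψ, t, hψne, ?_, hv, hg, hφ⟩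
    intro hm
    have : E.toAPTA.region.T (l, θ) v a φ = B3.must := hm
    rw [region_must'] at this
    rw [hval] at this
    exact absurd this.2 (by simp)

lemma region_build {L A AP : Type} (E : APECA L A AP) {l : L} {θ v : Val A} {a : A}
    {g : Guard A} {ψ : Set (PMF L)} {t : ℝ≥0}
    (hreach : E.toAPTA.regionPre.Reach (l, θ)) (hne : E.T l g a ψ ≠ B3.bot)
    (hv : v = valShift θ t) (hg : v ∈ g) :
    E.region.T (l, θ) v a (liftConstraint v (im a ψ)) ≠ B3.bot ∧
      (E.T l g a ψ = B3.must →
        E.region.T (l, θ) v a (liftConstraint v (im a ψ)) = B3.must) := by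
  constructor
  · show E.toAPTA.region.T (l, θ) v a (liftConstraint v (im a ψ)) ≠ B3.bot
    rw [region_ne_bot']
    exact ⟨hreach, (regionPre_ne_bot E.toAPTA l θ v a _).mpr
      ⟨g, im a ψ, t, (toAPTA_ne_bot E l g a _).mpr ⟨ψ, hne, rfl⟩, hv, hg, rfl⟩⟩
  · intro hm
    show E.toAPTA.region.T (l, θ) v a (liftConstraint v (im a ψ)) = B3.must
    rw [region_must']
    exact ⟨hreach, (regionPre_must E.toAPTA l θ v a _).mpr
      ⟨g, im a ψ, t, (toAPTA_must E l g a _).mpr ⟨ψ, hm, rfl⟩, hv, hg, rfl⟩⟩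

/-! #### Distribution matchings -/

lemma mem_conjCR_lift {L1 L2 A : Type} {a : A} {v : Val A} {ψ1 : Set (PMF L1)}
    {ψ2 : Set (PMF L2)} {μ : PMF (Set A × ((L1 × Val A) × (L2 × Val A)))}
    (h : μ ∈ conjConstraintR (liftConstraint v (im a ψ1)) (liftConstraint v (im a ψ2))) :
    ∀ p, μ p ≠ 0 → p.1 = ({a} : Set A) ∧
      p.2.1.2 = valReset v ({a} : Set A) ∧ p.2.2.2 = valReset v ({a} : Set A) := by
  obtain ⟨h1, h2⟩ := h
  rw [lift_im] at h1 h2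
  obtain ⟨κ1, hκ1, he1⟩ := h1
  obtain ⟨κ2, hκ2, he2⟩ := h2
  intro p hp
  have m1 : (μ.map fun q => (q.1, q.2.1)) (p.1, p.2.1) ≠ 0 := pmf_map_apply_ne μ _ hp
  have m2 : (μ.map fun q => (q.1, q.2.2)) (p.1, p.2.2) ≠ 0 := pmf_map_apply_ne μ _ hp
  rw [← he1] at m1
  rw [← he2] at m2
  obtain ⟨x1, _, hx1⟩ := pmf_map_ne_zero_elim κ1 _ m1
  obtain ⟨x2, _, hx2⟩ := pmf_map_ne_zero_elim κ2 _ m2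
  simp only [emb, Prod.mk.injEq] at hx1 hx2
  exact ⟨hx1.1, by rw [hx1.2], by rw [hx2.2]⟩

lemma match1 {L1 L2 A : Type} (a : A) (v : Val A) (ψ1 : Set (PMF L1)) (ψ2 : Set (PMF L2))
    {μ : PMF (Set A × ((L1 × L2) × Val A))}
    (h : μ ∈ liftConstraint v (im a (conjConstraint ψ1 ψ2))) :
    (μ.map fun p => (p.1, ((p.2.1.1, p.2.2), (p.2.1.2, p.2.2)))) ∈
      conjConstraintR (liftConstraint v (im a ψ1)) (liftConstraint v (im a ψ2)) := by
  rw [lift_im] at h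
  obtain ⟨ν, hν, rfl⟩ := h
  obtain ⟨hν1, hν2⟩ := hν
  constructor
  · rw [lift_im]
    refine ⟨ν.map Prod.fst, hν1, ?_⟩
    simp only [PMF.map_comp]
    rfl
  · rw [lift_im]
    refine ⟨ν.map Prod.snd, hν2, ?_⟩
    simp only [PMF.map_comp]
    rfl

lemma match2 {L1 L2 A : Type} (a : A) (v : Val A) (ψ1 : Set (PMF L1)) (ψ2 : Set (PMF L2))
    {μ : PMF (Set A × ((L1 × Val A) × (L2 × Val A)))}
    (h : μ ∈ conjConstraintR (liftConstraint v (im a ψ1)) (liftConstraint v (im a ψ2))) :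
    (μ.map fun p => (p.1, ((p.2.1.1, p.2.2.1), p.2.1.2))) ∈
      liftConstraint v (im a (conjConstraint ψ1 ψ2)) := by
  have hsupp := mem_conjCR_lift h
  obtain ⟨h1, h2⟩ := h
  rw [lift_im] at h1 h2
  obtain ⟨κ1, hκ1, he1⟩ := h1
  obtain ⟨κ2, hκ2, he2⟩ := h2
  rw [lift_im]
  refine ⟨μ.map fun p => (p.2.1.1, p.2.2.1), ⟨?_, ?_⟩, ?_⟩
  · show (μ.map fun p => (p.2.1.1, p.2.2.1)).map Prod.fst ∈ ψ1
    have e1 : (μ.map fun p => (p.2.1.1, p.2.2.1)).map Prod.fst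
        = (μ.map fun q => (q.1, q.2.1)).map fun q => q.2.1 := by
      rw [PMF.map_comp, PMF.map_comp]; rfl
    rw [e1, ← he1, PMF.map_comp]
    have e2 : ((fun q : Set A × (L1 × Val A) => q.2.1) ∘ emb a v) = id := rfl
    rw [e2, PMF.map_id]
    exact hκ1
  · show (μ.map fun p => (p.2.1.1, p.2.2.1)).map Prod.snd ∈ ψ2
    have e1 : (μ.map fun p => (p.2.1.1, p.2.2.1)).map Prod.snd
        = (μ.map fun q => (q.1, q.2.2)).map fun q => q.2.1 := by
      rw [PMF.map_comp, PMF.map_comp]; rfl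
    rw [e1, ← he2, PMF.map_comp]
    have e2 : ((fun q : Set A × (L2 × Val A) => q.2.1) ∘ emb a v) = id := rfl
    rw [e2, PMF.map_id]
    exact hκ2
  · show (μ.map fun p => (p.2.1.1, p.2.2.1)).map (emb a v)
        = μ.map fun p => (p.1, ((p.2.1.1, p.2.2.1), p.2.1.2))
    rw [PMF.map_comp]
    apply pmf_map_congr
    intro p hp
    obtain ⟨hpa, hpb, _⟩ := hsupp p hp
    simp only [Function.comp, emb]
    rw [hpa, hpb]

lemma reach_proj1 {L1 L2 A AP : Type} (E1 : APECA L1 A AP) (E2 : APECA L2 A AP) :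
    ∀ s, (E1.conj E2).toAPTA.regionPre.Reach s →
      E1.toAPTA.regionPre.Reach (s.1.1, s.2) := by
  intro s hs
  induction hs with
  | init => exact RAPA.Reach.init
  | @step s v a φ μ Y s' hr hT hμ hne ih =>
    have hT' := (regionPre_ne_bot (E1.conj E2).toAPTA s.1 s.2 v a φ).mp hT
    obtain ⟨g, φc, t, hne0, hv, hg, hφ⟩ := hT'
    obtain ⟨ψ, hψne, hφc⟩ := (toAPTA_ne_bot (E1.conj E2) s.1 g a φc).mp hne0
    obtain ⟨g1, g2, ψ1, ψ2, h1, h2, hgg, hψψ, _⟩ := conj_decomp hψne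
    subst hφ hφc hψψ hgg
    rw [lift_im] at hμ
    obtain ⟨ν, hν, rfl⟩ := hμ
    obtain ⟨l0, hl0, heq⟩ := pmf_map_ne_zero_elim ν (emb a v) hne
    simp only [emb, Prod.mk.injEq] at heq
    obtain ⟨hY, hs'⟩ := heq
    have hT1 : E1.toAPTA.regionPre.T (s.1.1, s.2) v a
        (liftConstraint v (im a ψ1)) ≠ B3.bot :=
      (regionPre_ne_bot E1.toAPTA s.1.1 s.2 v a _).mpr
        ⟨g1, im a ψ1, t, (toAPTA_ne_bot E1 s.1.1 g1 a _).mpr ⟨ψ1, h1, rfl⟩, hv, hg.1, rfl⟩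
    have hμ1 : (ν.map Prod.fst).map (emb a v) ∈ liftConstraint v (im a ψ1) := by
      rw [lift_im]; exact ⟨ν.map Prod.fst, hν.1, rfl⟩
    have hne1 : ((ν.map Prod.fst).map (emb a v)) (emb a v l0.1) ≠ 0 := by
      rw [PMF.map_comp]
      exact pmf_map_apply_ne ν (fun x => emb a v x.1) hl0
    have := RAPA.Reach.step (Y := ({a} : Set A))
      (s' := (l0.1, valReset v ({a} : Set A))) ih hT1 hμ1 hne1
    rw [hs']
    exact this

lemma reach_proj2 {L1 L2 A AP : Type} (E1 : APECA L1 A AP) (E2 : APECA L2 A AP) :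
    ∀ s, (E1.conj E2).toAPTA.regionPre.Reach s →
      E2.toAPTA.regionPre.Reach (s.1.2, s.2) := by
  intro s hs
  induction hs with
  | init => exact RAPA.Reach.init
  | @step s v a φ μ Y s' hr hT hμ hne ih =>
    have hT' := (regionPre_ne_bot (E1.conj E2).toAPTA s.1 s.2 v a φ).mp hT
    obtain ⟨g, φc, t, hne0, hv, hg, hφ⟩ := hT'
    obtain ⟨ψ, hψne, hφc⟩ := (toAPTA_ne_bot (E1.conj E2) s.1 g a φc).mp hne0
    obtain ⟨g1, g2, ψ1, ψ2, h1, h2, hgg, hψψ, _⟩ := conj_decomp hψne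
    subst hφ hφc hψψ hgg
    rw [lift_im] at hμ
    obtain ⟨ν, hν, rfl⟩ := hμ
    obtain ⟨l0, hl0, heq⟩ := pmf_map_ne_zero_elim ν (emb a v) hne
    simp only [emb, Prod.mk.injEq] at heq
    obtain ⟨hY, hs'⟩ := heq
    have hT2 : E2.toAPTA.regionPre.T (s.1.2, s.2) v a
        (liftConstraint v (im a ψ2)) ≠ B3.bot :=
      (regionPre_ne_bot E2.toAPTA s.1.2 s.2 v a _).mpr
        ⟨g2, im a ψ2, t, (toAPTA_ne_bot E2 s.1.2 g2 a _).mpr ⟨ψ2, h2, rfl⟩, hv, hg.2, rfl⟩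
    have hμ2 : (ν.map Prod.snd).map (emb a v) ∈ liftConstraint v (im a ψ2) := by
      rw [lift_im]; exact ⟨ν.map Prod.snd, hν.2, rfl⟩
    have hne2 : ((ν.map Prod.snd).map (emb a v)) (emb a v l0.2) ≠ 0 := by
      rw [PMF.map_comp]
      exact pmf_map_apply_ne ν (fun x => emb a v x.2) hl0
    have := RAPA.Reach.step (Y := ({a} : Set A))
      (s' := (l0.2, valReset v ({a} : Set A))) ih hT2 hμ2 hne2
    rw [hs']
    exact this

lemma dir1_distLift {L1 L2 A AP : Type} (E1 : APECA L1 A AP) (E2 : APECA L2 A AP)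
    {l1 : L1} {l2 : L2} {θ v : Val A} {a : A} {ψ1 : Set (PMF L1)} {ψ2 : Set (PMF L2)}
    (hreach : (E1.conj E2).toAPTA.regionPre.Reach ((l1, l2), θ))
    (hpre : (E1.conj E2).toAPTA.regionPre.T ((l1, l2), θ) v a
        (liftConstraint v (im a (conjConstraint ψ1 ψ2))) ≠ B3.bot) :
    ∀ μ1 ∈ liftConstraint v (im a (conjConstraint ψ1 ψ2)),
      ∃ μ2 ∈ conjConstraintR (liftConstraint v (im a ψ1)) (liftConstraint v (im a ψ2)),
        distLift (fun c q => (E1.conj E2).toAPTA.regionPre.Reach c ∧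
          q.1 = (c.1.1, c.2) ∧ q.2 = (c.1.2, c.2)) μ1 μ2 := by
  intro μ1 hμ1
  refine ⟨_, match1 a v ψ1 ψ2 hμ1, ?_⟩
  apply distLift_map
  intro p hp
  exact ⟨rfl, RAPA.Reach.step (Y := p.1) (s' := p.2) hreach hpre hμ1 hp, rfl, rfl⟩

lemma dir2_distLift {L1 L2 A AP : Type} (E1 : APECA L1 A AP) (E2 : APECA L2 A AP)
    {l1 : L1} {l2 : L2} {θ v : Val A} {a : A} {ψ1 : Set (PMF L1)} {ψ2 : Set (PMF L2)}
    (hreach : (E1.conj E2).toAPTA.regionPre.Reach ((l1, l2), θ))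
    (hpre : (E1.conj E2).toAPTA.regionPre.T ((l1, l2), θ) v a
        (liftConstraint v (im a (conjConstraint ψ1 ψ2))) ≠ B3.bot) :
    ∀ μ1 ∈ conjConstraintR (liftConstraint v (im a ψ1)) (liftConstraint v (im a ψ2)),
      ∃ μ2 ∈ liftConstraint v (im a (conjConstraint ψ1 ψ2)),
        distLift (fun q c => (E1.conj E2).toAPTA.regionPre.Reach c ∧
          q.1 = (c.1.1, c.2) ∧ q.2 = (c.1.2, c.2)) μ1 μ2 := by
  intro μ1 hμ1
  refine ⟨_, match2 a v ψ1 ψ2 hμ1, ?_⟩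
  apply distLift_map
  intro p hp
  obtain ⟨hpa, hpb, hpc⟩ := mem_conjCR_lift hμ1 p hp
  refine ⟨rfl, ?_, rfl, ?_⟩
  · exact RAPA.Reach.step hreach hpre (match2 a v ψ1 ψ2 hμ1)
      (pmf_map_apply_ne μ1 _ hp)
  · show p.2.2 = (p.2.2.1, p.2.1.2)
    rw [hpb, ← hpc]

end RegionConjAux

/-- Lemma 2.  The region construction commutes with
conjunction up to mutual weak refinement:
`R(E1 ∧ E2) ≡ R(E1) ∧ R(E2)`. -/
theorem region_commutes_with_conjunction {L1 L2 A AP : Type}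
    (E1 : APECA L1 A AP) (E2 : APECA L2 A AP)
    (hc1 : E1.Complete) (hc2 : E2.Complete)
    (hd1 : E1.ActionDet) (hd2 : E2.ActionDet) :
    RAPA.Equiv (E1.conj E2).region (RAPA.conj E1.region E2.region) := by
  constructor
  · -- R(E1 ∧ E2) ≼_W R(E1) ∧ R(E2)
    refine ⟨fun c q => (E1.conj E2).toAPTA.regionPre.Reach c ∧
      q.1 = (c.1.1, c.2) ∧ q.2 = (c.1.2, c.2), ?_, RAPA.Reach.init, rfl, rfl⟩
    rintro c q ⟨hreach, hq1, hq2⟩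
    obtain ⟨⟨l1, l2⟩, θ⟩ := c
    obtain ⟨q1, q2⟩ := q
    simp only at hq1 hq2
    subst hq1 hq2
    refine ⟨?_, ?_, fun P hP => hP⟩
    · -- must transitions of the conjunction of the regions
      intro v a φ2 hmust
      have hne : (RAPA.conj E1.region E2.region).T ((l1, θ), (l2, θ)) v a φ2 ≠ B3.bot := by
        rw [hmust]; simp
      obtain ⟨φa, φb, ha, hb, hφ2, hdisj⟩ := rconj_decomp hne
      obtain ⟨hr1, g1, ψ1, t1, hne1, himp1, hv1, hg1, hφa⟩ := region_decomp E1 ha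
      obtain ⟨hr2, g2, ψ2, t2, hne2, himp2, hv2, hg2, hφb⟩ := region_decomp E2 hb
      have hmust12 : E1.T l1 g1 a ψ1 = B3.must ∨ E2.T l2 g2 a ψ2 = B3.must := by
        rcases hdisj hmust with h | h
        · exact Or.inl (himp1 h)
        · exact Or.inr (himp2 h)
      obtain ⟨hcne, hcmust⟩ := conj_build (p := (l1, l2)) hne1 hne2
      obtain ⟨hbne, hbmust⟩ := region_build (E1.conj E2) hreach hcne hv1 ⟨hg1, hg2⟩
      have hpre : (E1.conj E2).toAPTA.regionPre.T ((l1, l2), θ) v a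
          (liftConstraint v (im a (conjConstraint ψ1 ψ2))) ≠ B3.bot :=
        ((region_ne_bot' (E1.conj E2).toAPTA ((l1, l2), θ) v a _).mp hbne).2
      refine ⟨liftConstraint v (im a (conjConstraint ψ1 ψ2)), hbmust (hcmust hmust12), ?_⟩
      intro μ1 hμ1
      obtain ⟨μ2, hμ2, hlift⟩ := dir1_distLift E1 E2 hreach hpre μ1 hμ1
      refine ⟨μ2, ?_, hlift⟩
      rw [hφ2, hφa, hφb]
      exact hμ2
    · -- non-⊥ transitions of the region of the conjunction
      intro v a φ1 hne
      obtain ⟨_, g, ψ, t, hcne, _, hv, hg, hφ1⟩ := region_decomp (E1.conj E2) hne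
      obtain ⟨g1, g2, ψ1, ψ2, h1, h2, hgeq, hψeq, _⟩ := conj_decomp hcne
      subst hgeq hψeq
      have hr1 := reach_proj1 E1 E2 _ hreach
      have hr2 := reach_proj2 E1 E2 _ hreach
      obtain ⟨hb1, _⟩ := region_build E1 hr1 h1 hv hg.1
      obtain ⟨hb2, _⟩ := region_build E2 hr2 h2 hv hg.2
      obtain ⟨hbc, _⟩ := rconj_build (p := ((l1, θ), (l2, θ))) hb1 hb2
      have hpre : (E1.conj E2).toAPTA.regionPre.T ((l1, l2), θ) v a
          (liftConstraint v (im a (conjConstraint ψ1 ψ2))) ≠ B3.bot := by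
        have := (region_ne_bot' (E1.conj E2).toAPTA ((l1, l2), θ) v a φ1).mp hne
        rw [hφ1] at this
        exact this.2
      refine ⟨conjConstraintR (liftConstraint v (im a ψ1)) (liftConstraint v (im a ψ2)),
        hbc, ?_⟩
      rw [hφ1]
      exact dir1_distLift E1 E2 hreach hpre
  · -- R(E1) ∧ R(E2) ≼_W R(E1 ∧ E2)
    refine ⟨fun q c => (E1.conj E2).toAPTA.regionPre.Reach c ∧
      q.1 = (c.1.1, c.2) ∧ q.2 = (c.1.2, c.2), ?_, RAPA.Reach.init, rfl, rfl⟩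
    rintro q c ⟨hreach, hq1, hq2⟩
    obtain ⟨⟨l1, l2⟩, θ⟩ := c
    obtain ⟨q1, q2⟩ := q
    simp only at hq1 hq2
    subst hq1 hq2
    refine ⟨?_, ?_, fun P hP => hP⟩
    · -- must transitions of the region of the conjunction
      intro v a φ2 hmust
      have hne0 : (E1.conj E2).region.T ((l1, l2), θ) v a φ2 ≠ B3.bot := by
        rw [hmust]; simp
      obtain ⟨_, g, ψ, t, hcne, himp, hv, hg, hφ2⟩ := region_decomp (E1.conj E2) hne0
      have hcmust := himp hmust
      obtain ⟨g1, g2, ψ1, ψ2, h1, h2, hgeq, hψeq, hdisj⟩ := conj_decomp hcne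
      subst hgeq hψeq
      have hr1 := reach_proj1 E1 E2 _ hreach
      have hr2 := reach_proj2 E1 E2 _ hreach
      obtain ⟨hb1, hm1⟩ := region_build E1 hr1 h1 hv hg.1
      obtain ⟨hb2, hm2⟩ := region_build E2 hr2 h2 hv hg.2
      obtain ⟨_, hbm⟩ := rconj_build (p := ((l1, θ), (l2, θ))) hb1 hb2
      have hpre : (E1.conj E2).toAPTA.regionPre.T ((l1, l2), θ) v a
          (liftConstraint v (im a (conjConstraint ψ1 ψ2))) ≠ B3.bot := by
        have := (region_ne_bot' (E1.conj E2).toAPTA ((l1, l2), θ) v a φ2).mp hne0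
        rw [hφ2] at this
        exact this.2
      refine ⟨conjConstraintR (liftConstraint v (im a ψ1)) (liftConstraint v (im a ψ2)),
        hbm ?_, ?_⟩
      · rcases hdisj hcmust with h | h
        · exact Or.inl (hm1 h)
        · exact Or.inr (hm2 h)
      · rw [hφ2]
        exact dir2_distLift E1 E2 hreach hpre
    · -- non-⊥ transitions of the conjunction of the regions
      intro v a φ hne
      obtain ⟨φa, φb, ha, hb, hφ, _⟩ := rconj_decomp hne
      obtain ⟨hr1, g1, ψ1, t1, hne1, _, hv1, hg1, hφa⟩ := region_decomp E1 ha
      obtain ⟨hr2, g2, ψ2, t2, hne2, _, hv2, hg2, hφb⟩ := region_decomp E2 hb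
      obtain ⟨hcne, _⟩ := conj_build (p := (l1, l2)) hne1 hne2
      obtain ⟨hbne, _⟩ := region_build (E1.conj E2) hreach hcne hv1 ⟨hg1, hg2⟩
      have hpre : (E1.conj E2).toAPTA.regionPre.T ((l1, l2), θ) v a
          (liftConstraint v (im a (conjConstraint ψ1 ψ2))) ≠ B3.bot :=
        ((region_ne_bot' (E1.conj E2).toAPTA ((l1, l2), θ) v a _).mp hbne).2
      refine ⟨liftConstraint v (im a (conjConstraint ψ1 ψ2)), hbne, ?_⟩
      rw [hφ, hφa, hφb]
      exact dir2_distLift E1 E2 hreach hpre
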